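/- Soundness with squeezing required only at initial states (Remark after Theorem 1): Let TS = (Σ, Init, Tr, P) be a recidivist transition system and let ⋎ : Σ → Σ be simulation-inducing for TS. Suppose that ⋎ decreases the rank only of the initial non-base states, i.e., ρ(⋎(σ)) ≺ ρ(σ) for every σ ∈ Init with ρ(σ) ∉ B. If TS_B = (Σ, Init ∩ Σ_B, Tr, P) is safe, then TS is safe. -/
import Mathlib


/-- `TrPow Tr k σ σ'` : `σ'` is reachable from `σ` by a trace of length exactly `k`
(k-fold relational composition of `Tr`, with `TrPow Tr 0` the identity relation). -/
def TrPow {S : Type*} (Tr : S → S → Prop) : ℕ → S → S → Prop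
  | 0 => fun σ σ' => σ = σ'
  | n + 1 => fun σ σ' => ∃ σ₁, Tr σ σ₁ ∧ TrPow Tr n σ₁ σ'

/-- A transition system is safe if every state reachable (by a finite trace)
from an initial state is a good state. -/
def Safe {S : Type*} (Init : Set S) (Tr : S → S → Prop) (P : Set S) : Prop :=
  ∀ σ₀ σ, σ₀ ∈ Init → Relation.ReflTransGen Tr σ₀ σ → σ ∈ P

/-- Recidivism: bad states have successors, and transitions from bad states lead
to bad states. -/
def Recidivist {S : Type*} (Tr : S → S → Prop) (P : Set S) : Prop :=
  (∀ σ, σ ∉ P → ∃ σ', Tr σ σ') ∧ (∀ σ σ', σ ∉ P → Tr σ σ' → σ' ∉ P)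

/-- A function `f : S → S` is simulation-inducing for `(Init, Tr, P)`:
initial anchor, simulation inducing (with parameters `n_σ ≥ 1`, `m_σ ≥ 0`),
and fault preservation. -/
def SimulationInducing {S : Type*} (Init : Set S) (Tr : S → S → Prop) (P : Set S)
    (f : S → S) : Prop :=
  (∀ σ, σ ∈ Init → f σ ∈ Init) ∧
  (∀ σ, ∃ n m : ℕ, 1 ≤ n ∧ ∀ σ', TrPow Tr n σ σ' → TrPow Tr m (f σ) (f σ')) ∧
  (∀ σ, σ ∉ P → f σ ∉ P)

lemma trpow_to_rtg {S : Type*} {Tr : S → S → Prop} :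
    ∀ {k σ σ'}, TrPow Tr k σ σ' → Relation.ReflTransGen Tr σ σ'
  | 0, _, _, h => by rw [show TrPow Tr 0 = fun a b => a = b from rfl] at h; exact h ▸ .refl
  | k + 1, σ, σ', ⟨σ₁, h1, h2⟩ =>
      Relation.ReflTransGen.head h1 (trpow_to_rtg h2)

lemma rtg_to_trpow {S : Type*} {Tr : S → S → Prop} {σ σ' : S}
    (h : Relation.ReflTransGen Tr σ σ') : ∃ k, TrPow Tr k σ σ' := by
  induction h with
  | refl => exact ⟨0, rfl⟩
  | tail hστ hstep ih =>
      obtain ⟨k, hk⟩ := ih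
      refine ⟨k + 1, ?_⟩
      clear hστ
      induction k generalizing σ with
      | zero => exact ⟨_, hk ▸ hstep, rfl⟩
      | succ n ih =>
          obtain ⟨σ₁, h1, h2⟩ := hk
          exact ⟨σ₁, h1, ih h2⟩

lemma trpow_comp {S : Type*} {Tr : S → S → Prop} :
    ∀ {a b σ σ₁ σ'}, TrPow Tr a σ σ₁ → TrPow Tr b σ₁ σ' → TrPow Tr (a + b) σ σ'
  | 0, b, σ, σ₁, σ', h1, h2 => by
      rw [show TrPow Tr 0 = fun a b => a = b from rfl] at h1
      simpa [h1] using h2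
  | a + 1, b, σ, σ₁, σ', ⟨τ, ht, h1⟩, h2 => by
      have h3 : TrPow Tr ((a + b) + 1) σ σ' := ⟨τ, ht, trpow_comp h1 h2⟩
      simpa [Nat.add_right_comm] using h3

lemma trpow_split {S : Type*} {Tr : S → S → Prop} :
    ∀ {a b σ σ'}, TrPow Tr (a + b) σ σ' → ∃ σ₁, TrPow Tr a σ σ₁ ∧ TrPow Tr b σ₁ σ'
  | 0, b, σ, σ', h => ⟨σ, rfl, by simpa using h⟩
  | a + 1, b, σ, σ', h => by
      have h' : TrPow Tr ((a + b) + 1) σ σ' := by simpa [Nat.add_right_comm] using h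
      obtain ⟨τ, ht, h2⟩ := h'
      obtain ⟨σ₁, hA, hB⟩ := trpow_split h2
      exact ⟨σ₁, ⟨τ, ht, hA⟩, hB⟩

lemma bad_extend {S : Type*} {Tr : S → S → Prop} {P : Set S}
    (hrec : Recidivist Tr P) :
    ∀ (j : ℕ) (σ : S), σ ∉ P → ∃ σ', TrPow Tr j σ σ' ∧ σ' ∉ P := by
  intro j
  induction j with
  | zero => exact fun σ h => ⟨σ, rfl, h⟩
  | succ n ih =>
      intro σ h
      obtain ⟨τ, hτ⟩ := hrec.1 σ h
      obtain ⟨σ', h1, h2⟩ := ih τ (hrec.2 σ τ h hτ)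
      exact ⟨σ', ⟨τ, hτ, h1⟩, h2⟩

lemma bad_lift {S : Type*} {Init : Set S} {Tr : S → S → Prop} {P : Set S} {f : S → S}
    (hrec : Recidivist Tr P) (hsim : SimulationInducing Init Tr P f) :
    ∀ (k : ℕ) (σ₀ σ : S), TrPow Tr k σ₀ σ → σ ∉ P →
      ∃ τ, τ ∉ P ∧ Relation.ReflTransGen Tr (f σ₀) τ := by
  intro k
  induction k using Nat.strong_induction_on with
  | _ k ih =>
    intro σ₀ σ hk hbad
    obtain ⟨n, m, hn1, hsimσ⟩ := hsim.2.1 σ₀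
    rcases le_or_gt n k with hle | hlt
    · obtain ⟨rest, hrest⟩ := Nat.exists_eq_add_of_le hle
      rw [hrest] at hk
      obtain ⟨σ₁, hA, hB⟩ := trpow_split hk
      have hm := hsimσ σ₁ hA
      obtain ⟨τ, hτbad, hτ⟩ := ih rest (by omega) σ₁ σ hB hbad
      exact ⟨τ, hτbad, (trpow_to_rtg hm).trans hτ⟩
    · obtain ⟨σ'', hext, hbad''⟩ := bad_extend hrec (n - k) σ hbad
      have hfull : TrPow Tr n σ₀ σ'' := by
        have := trpow_comp hk hext
        rwa [show k + (n - k) = n by omega] at this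
      have hm := hsimσ σ'' hfull
      exact ⟨f σ'', hsim.2.2 σ'' hbad'', trpow_to_rtg hm⟩

/-- **Soundness with squeezing required only at initial states (Remark after Theorem 1).**
It suffices that `f` decreases the rank of the *initial* non-base states. -/
theorem squeezer_soundness_initial_only {S X : Type*}
    (Init : Set S) (Tr : S → S → Prop) (P : Set S)
    (prec : X → X → Prop) (hwf : WellFounded prec)
    (htrans : ∀ x y z, prec x y → prec y z → prec x z)
    (B : Set X) (hmin : ∀ x : X, (∀ y, ¬ prec y x) → x ∈ B)
    (ρ : S → X) (f : S → S)
    (hsqueeze : ∀ σ, σ ∈ Init → ρ σ ∉ B → prec (ρ (f σ)) (ρ σ))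
    (hrec : Recidivist Tr P)
    (hsim : SimulationInducing Init Tr P f)
    (hbase_safe : ∀ σ₀ σ, σ₀ ∈ Init → ρ σ₀ ∈ B → Relation.ReflTransGen Tr σ₀ σ → σ ∈ P) :
    Safe Init Tr P := by
  intro σ₀ σ hinit hreach
  by_contra hbad
  have key : ∀ x : X, ∀ σ₀ : S, ρ σ₀ = x → σ₀ ∈ Init →
      ∀ σ, Relation.ReflTransGen Tr σ₀ σ → σ ∉ P → False := by
    intro x
    induction x using hwf.induction with
    | _ x ih =>
      intro σ₀ hx hinit σ hr hb
      by_cases hB : ρ σ₀ ∈ B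
      · exact hb (hbase_safe σ₀ σ hinit hB hr)
      · obtain ⟨k, hk⟩ := rtg_to_trpow hr
        obtain ⟨τ, hτbad, hτ⟩ := bad_lift hrec hsim k σ₀ σ hk hb
        exact ih (ρ (f σ₀)) (hx ▸ hsqueeze σ₀ hinit hB) (f σ₀) rfl
          (hsim.1 σ₀ hinit) τ hτ hτbad
  exact key (ρ σ₀) σ₀ rfl hinit σ hreach hbad
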